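/- arXiv:1506.04444 — 6 statements merged into one kernel-verified Lean document; each statement's English description precedes it below -/
import Mathlib

section
/- (Ky Fan k-norm inequality) Let X ∈ ℝ^{m×n} have singular value decomposition X = U D Vᵀ with singular values in decreasing order on the diagonal of D. Then for every k with 1 ≤ k ≤ min(m,n), the sum of the first k diagonal entries of X is at most the sum of the first k singular values: ∑_{i=1}^k X_{ii} ≤ ∑_{i=1}^k σ_i. -/
open Finset Matrix

/-! Writing `X = U D Vᵀ` entrywise gives `∑_{i<k} X i i = ∑ a, σ a * c a` with
`c a = ∑_{i<k} U i a * V i a`. By Cauchy–Schwarz on the orthonormal columns of `U` and `V` each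
`c a ≤ 1`, and on their orthonormal rows `∑_{a ∈ s} c a ≤ k` for every set `s` of indices.
Against such weights a nonnegative decreasing sequence `σ` gains at most its `k` largest terms:
split `σ` at the threshold `t = σ (k-1)`. -/

section Threshold

variable {ι : Type*} [Fintype ι] {σ c : ι → ℝ} {F : Finset ι} {t : ℝ}

theorem sum_mul_le_sum_of_threshold (ht : 0 ≤ t) (hσF : ∀ a ∈ F, t ≤ σ a)
    (hσnotF : ∀ a ∉ F, σ a ≤ t) (hc0 : ∀ a, 0 ≤ c a) (hc1 : ∀ a, c a ≤ 1)
    (hc : ∑ a, c a ≤ #F) :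
    ∑ a, σ a * c a ≤ ∑ a ∈ F, σ a := by
  classical
  have hsplit : ∑ a, (σ a - t) * c a ≤ ∑ a ∈ F, (σ a - t) := by
    rw [← sum_filter_add_sum_filter_not univ (· ∈ F), filter_mem_eq_inter, univ_inter,
      ← add_zero (∑ a ∈ F, (σ a - t))]
    gcongr with a ha a ha
    · exact mul_le_of_le_one_right (sub_nonneg.2 (hσF a ha)) (hc1 a)
    · exact sum_nonpos fun a ha ↦
        mul_nonpos_of_nonpos_of_nonneg (sub_nonpos.2 (hσnotF a (mem_filter.1 ha).2)) (hc0 a)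
  calc ∑ a, σ a * c a = ∑ a, (σ a - t) * c a + t * ∑ a, c a := by
        rw [mul_sum, ← sum_add_distrib]; ring_nf
    _ ≤ ∑ a ∈ F, (σ a - t) + t * #F := by gcongr
    _ = ∑ a ∈ F, σ a := by rw [sum_sub_distrib, sum_const, nsmul_eq_mul]; ring

/-- Only the positive parts of the weights matter, so a bound on every partial sum of `c`
replaces nonnegativity. -/
theorem sum_mul_le_sum_of_forall_sum_le_card (hσ0 : ∀ a, 0 ≤ σ a) (ht : 0 ≤ t)
    (hσF : ∀ a ∈ F, t ≤ σ a) (hσnotF : ∀ a ∉ F, σ a ≤ t) (hc1 : ∀ a, c a ≤ 1)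
    (hc : ∀ s : Finset ι, ∑ a ∈ s, c a ≤ #F) :
    ∑ a, σ a * c a ≤ ∑ a ∈ F, σ a := by
  have hpos : ∑ a, max (c a) 0 = ∑ a ∈ univ.filter (0 ≤ c ·), c a := by
    rw [sum_filter]
    refine sum_congr rfl fun a _ ↦ ?_
    split_ifs with h
    · exact max_eq_left h
    · exact max_eq_right (le_of_not_ge h)
  calc ∑ a, σ a * c a ≤ ∑ a, σ a * max (c a) 0 :=
        sum_le_sum fun a _ ↦ mul_le_mul_of_nonneg_left (le_max_left _ _) (hσ0 a)
    _ ≤ ∑ a ∈ F, σ a :=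
        sum_mul_le_sum_of_threshold ht hσF hσnotF (fun a ↦ le_max_right _ _)
          (fun a ↦ max_le (hc1 a) zero_le_one) (hpos ▸ hc _)

end Threshold

theorem sum_mul_le_one_of_sum_sq_le_one {ι : Type*} (s : Finset ι) {f g : ι → ℝ}
    (hf : ∑ i ∈ s, f i ^ 2 ≤ 1) (hg : ∑ i ∈ s, g i ^ 2 ≤ 1) :
    ∑ i ∈ s, f i * g i ≤ 1 :=
  calc ∑ i ∈ s, f i * g i ≤ √(∑ i ∈ s, f i ^ 2) * √(∑ i ∈ s, g i ^ 2) :=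
        Real.sum_mul_le_sqrt_mul_sqrt s f g
    _ ≤ 1 * 1 := by gcongr <;> exact Real.sqrt_le_one.mpr ‹_›
    _ = 1 := one_mul 1

namespace Matrix

variable {n ι : Type*} [Fintype n] [DecidableEq n] {U : Matrix n n ℝ}

theorem sum_row_sq_of_mem_orthogonalGroup (hU : U ∈ orthogonalGroup n ℝ) (i : n) :
    ∑ j, U i j ^ 2 = 1 := by
  simpa [mul_apply, sq] using congr_fun₂ (mem_orthogonalGroup_iff n ℝ |>.1 hU) i i

theorem sum_col_sq_of_mem_orthogonalGroup (hU : U ∈ orthogonalGroup n ℝ) (j : n) :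
    ∑ i, U i j ^ 2 = 1 := by
  simpa [mul_apply, sq] using congr_fun₂ (mem_orthogonalGroup_iff' n ℝ |>.1 hU) j j

theorem sum_row_sq_comp_le_one (hU : U ∈ orthogonalGroup n ℝ) {e : ι → n}
    (he : e.Injective) (s : Finset ι) (i : n) : ∑ a ∈ s, U i (e a) ^ 2 ≤ 1 := by
  rw [← sum_row_sq_of_mem_orthogonalGroup hU i]
  exact (sum_map s ⟨e, he⟩ fun j ↦ U i j ^ 2).symm.trans_le
    (sum_le_univ_sum_of_nonneg fun _ ↦ sq_nonneg _)

theorem sum_col_sq_comp_le_one (hU : U ∈ orthogonalGroup n ℝ) {e : ι → n}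
    (he : e.Injective) (s : Finset ι) (j : n) : ∑ a ∈ s, U (e a) j ^ 2 ≤ 1 := by
  rw [← sum_col_sq_of_mem_orthogonalGroup hU j]
  exact (sum_map s ⟨e, he⟩ fun i ↦ U i j ^ 2).symm.trans_le
    (sum_le_univ_sum_of_nonneg fun _ ↦ sq_nonneg _)

end Matrix

theorem Matrix.rectDiag_mul_apply {m n : ℕ} (hmn : m ≤ n) {α : Type*} (σ : Fin m → ℝ)
    (B : Matrix (Fin n) α ℝ) (a : Fin m) (j : α) :
    ((of fun (i : Fin m) (l : Fin n) => if (i : ℕ) = l then σ i else 0) * B) a j =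
      σ a * B (Fin.castLE hmn a) j := by
  rw [mul_apply, sum_eq_single (Fin.castLE hmn a)]
  · simp
  · intro l _ hl
    rw [of_apply, if_neg fun h ↦ hl (Fin.ext h.symm), zero_mul]
  · simp

theorem ky_fan_partial_trace_ineq (m n : ℕ) (hmn : m ≤ n)
    (X : Matrix (Fin m) (Fin n) ℝ)
    (U : Matrix (Fin m) (Fin m) ℝ) (V : Matrix (Fin n) (Fin n) ℝ)
    (hU : U ∈ Matrix.orthogonalGroup (Fin m) ℝ)
    (hV : V ∈ Matrix.orthogonalGroup (Fin n) ℝ)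
    (σ : Fin m → ℝ) (hσ0 : ∀ i, 0 ≤ σ i) (hσdec : Antitone σ)
    (hX : X = U * (Matrix.of fun (i : Fin m) (j : Fin n) => if (i : ℕ) = (j : ℕ) then σ i else 0) * Vᵀ) :
    ∀ k, 1 ≤ k → k ≤ m →
      ∑ i ∈ univ.filter (fun i : Fin m => (i : ℕ) < k), X i (Fin.castLE hmn i) ≤
      ∑ i ∈ univ.filter (fun i : Fin m => (i : ℕ) < k), σ i := by
  intro k hk1 hkm
  set F := univ.filter (fun i : Fin m => (i : ℕ) < k)
  have he := Fin.castLE_injective hmn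
  let c a := ∑ i ∈ F, U i a * V (Fin.castLE hmn i) (Fin.castLE hmn a)
  have hdiag : ∑ i ∈ F, X i (Fin.castLE hmn i) = ∑ a, σ a * c a := by
    simp only [hX, Matrix.mul_assoc, mul_apply (M := U), rectDiag_mul_apply hmn, transpose_apply,
      c, mul_sum]
    rw [sum_comm]
    exact sum_congr rfl fun _ _ ↦ sum_congr rfl fun _ _ ↦ by ring
  have hc1 (a : Fin m) : c a ≤ 1 :=
    sum_mul_le_one_of_sum_sq_le_one F (sum_col_sq_comp_le_one hU Function.injective_id F a)
      (sum_col_sq_comp_le_one hV he F _)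
  have hc (s : Finset (Fin m)) : ∑ a ∈ s, c a ≤ #F := by
    rw [sum_comm, card_eq_sum_ones, Nat.cast_sum, Nat.cast_one]
    exact sum_le_sum fun i _ ↦ sum_mul_le_one_of_sum_sq_le_one s
      (sum_row_sq_comp_le_one hU Function.injective_id s i) (sum_row_sq_comp_le_one hV he s _)
  let kth : Fin m := ⟨k - 1, by omega⟩
  have hσF (a : Fin m) (ha : a ∈ F) : σ kth ≤ σ a :=
    hσdec (Fin.le_def.2 (show (a : ℕ) ≤ k - 1 by simp only [F, mem_filter] at ha; omega))
  have hσnotF (a : Fin m) (ha : a ∉ F) : σ a ≤ σ kth :=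
    hσdec (Fin.le_def.2 (show k - 1 ≤ (a : ℕ) by
      simp only [F, mem_filter, mem_univ, true_and, not_lt] at ha; omega))
  rw [hdiag]
  exact sum_mul_le_sum_of_forall_sum_le_card hσ0 (hσ0 kth) hσF hσnotF hc1 hc
end

section
/- Let U ∈ ℝ^{m×m} and V ∈ ℝ^{n×n} be orthogonal matrices and define weights w_i^{(k)} = ∑_{j=1}^k U_{j,i} V_{j,i} for i = 1,...,m and 1 ≤ k ≤ m ≤ n. Then |w_i^{(k)}| ≤ 1 for every i, and ∑_{i=1}^m |w_i^{(k)}| ≤ k. -/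
/-! Both bounds are Cauchy–Schwarz against unit vectors. The weight `w_i` pairs the columns `i`
of `U` and `V`, truncated to the rows `j < k`, and a truncated unit vector has norm at most one.
For the sum, bound `|w_i|` by `∑_j |U j i| |V j i|` and exchange the sums: for each of the
`k` rows `j`, the sum over `i` pairs row `j` of `U` with part of row `j` of `V`, and so is
at most one. -/

open Finset Matrix

lemma abs_sum_mul_le_one_of_sum_sq_le_one {α : Type*} (s : Finset α) (f g : α → ℝ)
    (hf : ∑ i ∈ s, f i ^ 2 ≤ 1) (hg : ∑ i ∈ s, g i ^ 2 ≤ 1) :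
    |∑ i ∈ s, f i * g i| ≤ 1 := by
  rw [← sq_le_one_iff_abs_le_one]
  calc (∑ i ∈ s, f i * g i) ^ 2 ≤ (∑ i ∈ s, f i ^ 2) * ∑ i ∈ s, g i ^ 2 :=
        sum_mul_sq_le_sq_mul_sq s f g
    _ ≤ 1 := mul_le_one₀ hf (sum_nonneg fun i _ => sq_nonneg (g i)) hg

lemma sum_sq_comp_le_one {ι κ : Type*} [Fintype κ] {x : κ → ℝ} (hx : ∑ j, x j ^ 2 = 1)
    (e : ι ↪ κ) (s : Finset ι) :
    ∑ j ∈ s, x (e j) ^ 2 ≤ 1 := by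
  rw [← sum_map s e (fun j => x j ^ 2), ← hx]
  exact sum_le_univ_sum_of_nonneg fun j => sq_nonneg (x j)

section OrthogonalGroup

variable {ι κ : Type*} [Fintype ι] [DecidableEq ι] [Fintype κ] [DecidableEq κ]

lemma sum_row_sq_eq_one_of_mem_orthogonalGroup {U : Matrix ι ι ℝ}
    (hU : U ∈ orthogonalGroup ι ℝ) (i : ι) : ∑ j, U i j ^ 2 = 1 := by
  simpa [mul_apply, sq] using congrFun₂ ((mem_orthogonalGroup_iff ι ℝ).mp hU) i i

lemma sum_col_sq_eq_one_of_mem_orthogonalGroup {U : Matrix ι ι ℝ}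
    (hU : U ∈ orthogonalGroup ι ℝ) (j : ι) : ∑ i, U i j ^ 2 = 1 := by
  simpa [mul_apply, sq] using congrFun₂ ((mem_orthogonalGroup_iff' ι ℝ).mp hU) j j

variable {U : Matrix ι ι ℝ} {V : Matrix κ κ ℝ}

lemma abs_sum_mul_comp_le_one (hU : U ∈ orthogonalGroup ι ℝ)
    (hV : V ∈ orthogonalGroup κ ℝ)
    (e : ι ↪ κ) (s : Finset ι) (i : ι) :
    |∑ j ∈ s, U j i * V (e j) (e i)| ≤ 1 :=
  abs_sum_mul_le_one_of_sum_sq_le_one s _ _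
    (sum_sq_comp_le_one (sum_col_sq_eq_one_of_mem_orthogonalGroup hU i) (.refl ι) s)
    (sum_sq_comp_le_one (sum_col_sq_eq_one_of_mem_orthogonalGroup hV (e i)) e s)

lemma sum_abs_sum_mul_comp_le_card (hU : U ∈ orthogonalGroup ι ℝ)
    (hV : V ∈ orthogonalGroup κ ℝ) (e : ι ↪ κ) (s : Finset ι) :
    ∑ i, |∑ j ∈ s, U j i * V (e j) (e i)| ≤ #s := by
  have row_bound (j : ι) : ∑ i, |U j i| * |V (e j) (e i)| ≤ 1 := by
    refine (le_abs_self _).trans (abs_sum_mul_le_one_of_sum_sq_le_one _ _ _ ?_ ?_)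
    · simpa only [sq_abs] using (sum_row_sq_eq_one_of_mem_orthogonalGroup hU j).le
    · simpa only [sq_abs] using sum_sq_comp_le_one
        (sum_row_sq_eq_one_of_mem_orthogonalGroup hV (e j)) e univ
  calc ∑ i, |∑ j ∈ s, U j i * V (e j) (e i)|
      ≤ ∑ i, ∑ j ∈ s, |U j i| * |V (e j) (e i)| := by
        gcongr with i
        simpa only [abs_mul] using abs_sum_le_sum_abs (fun j => U j i * V (e j) (e i)) s
    _ = ∑ j ∈ s, ∑ i, |U j i| * |V (e j) (e i)| := sum_comm
    _ ≤ ∑ _j ∈ s, 1 := sum_le_sum fun j _ => row_bound j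
    _ = #s := by simp

end OrthogonalGroup

theorem ky_fan_weights_bound_general (m n : ℕ) (hmn : m ≤ n)
    (U : Matrix (Fin m) (Fin m) ℝ) (V : Matrix (Fin n) (Fin n) ℝ)
    (hU : U ∈ Matrix.orthogonalGroup (Fin m) ℝ)
    (hV : V ∈ Matrix.orthogonalGroup (Fin n) ℝ)
    (k : ℕ) :
    (∀ i : Fin m,
      |∑ j ∈ univ.filter (fun j : Fin m => (j : ℕ) < k),
          U j i * V (Fin.castLE hmn j) (Fin.castLE hmn i)| ≤ 1) ∧
    ∑ i : Fin m,
      |∑ j ∈ univ.filter (fun j : Fin m => (j : ℕ) < k),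
          U j i * V (Fin.castLE hmn j) (Fin.castLE hmn i)| ≤ (k : ℝ) := by
  refine ⟨abs_sum_mul_comp_le_one hU hV (Fin.castLEEmb hmn) _, ?_⟩
  have hcard : #(univ.filter fun j : Fin m => (j : ℕ) < k) ≤ k :=
    Fin.card_filter_val_lt.trans_le (min_le_right m k)
  exact (sum_abs_sum_mul_comp_le_card hU hV (Fin.castLEEmb hmn) _).trans
    (by exact_mod_cast hcard)

theorem ky_fan_weights_bound (m n : ℕ) (hmn : m ≤ n)
    (U : Matrix (Fin m) (Fin m) ℝ) (V : Matrix (Fin n) (Fin n) ℝ)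
    (hU : U ∈ Matrix.orthogonalGroup (Fin m) ℝ)
    (hV : V ∈ Matrix.orthogonalGroup (Fin n) ℝ)
    (k : ℕ) (hk1 : 1 ≤ k) (hkm : k ≤ m) :
    (∀ i : Fin m,
      |∑ j ∈ univ.filter (fun j : Fin m => (j : ℕ) < k),
          U j i * V (Fin.castLE hmn j) (Fin.castLE hmn i)| ≤ 1) ∧
    ∑ i : Fin m,
      |∑ j ∈ univ.filter (fun j : Fin m => (j : ℕ) < k),
          U j i * V (Fin.castLE hmn j) (Fin.castLE hmn i)| ≤ (k : ℝ) :=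
  ky_fan_weights_bound_general m n hmn U V hU hV k
end

section
/- Equality case of Ky Fan: if X ∈ ℝ^{m×n} has SVD X = U·Diag(σ)·Vᵀ and tr_k(X) = ∑_{i=1}^k σ_i for every k = 1,...,m, then X equals the diagonal matrix Diag(σ). -/
open Finset Matrix

theorem ky_fan_equality_case (m n : ℕ) (hmn : m ≤ n)
    (X : Matrix (Fin m) (Fin n) ℝ)
    (U : Matrix (Fin m) (Fin m) ℝ) (V : Matrix (Fin n) (Fin n) ℝ)
    (hU : U ∈ Matrix.orthogonalGroup (Fin m) ℝ)
    (hV : V ∈ Matrix.orthogonalGroup (Fin n) ℝ)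
    (σ : Fin m → ℝ) (hσ0 : ∀ i, 0 ≤ σ i) (hσdec : Antitone σ)
    (hX : X = U * (Matrix.of fun (i : Fin m) (j : Fin n) =>
        if (i : ℕ) = (j : ℕ) then σ i else 0) * Vᵀ)
    (heq : ∀ k, 1 ≤ k → k ≤ m →
      ∑ i ∈ univ.filter (fun i : Fin m => (i : ℕ) < k), X i (Fin.castLE hmn i) =
      ∑ i ∈ univ.filter (fun i : Fin m => (i : ℕ) < k), σ i) :
    X = Matrix.of fun (i : Fin m) (j : Fin n) =>
        if (i : ℕ) = (j : ℕ) then σ i else 0 := by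
  set D : Matrix (Fin m) (Fin n) ℝ := Matrix.of fun (i : Fin m) (j : Fin n) =>
      if (i : ℕ) = (j : ℕ) then σ i else 0 with hD
  -- Step 1: diagonal entries agree
  have hS : ∀ k, k ≤ m →
      ∑ i ∈ univ.filter (fun i : Fin m => (i : ℕ) < k), X i (Fin.castLE hmn i) =
      ∑ i ∈ univ.filter (fun i : Fin m => (i : ℕ) < k), σ i := by
    intro k hk
    rcases Nat.eq_zero_or_pos k with h0 | h1
    · subst h0; simp
    · exact heq k h1 hk
  have hdiag : ∀ i : Fin m, X i (Fin.castLE hmn i) = σ i := by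
    intro i
    have h1 := hS (i.val + 1) i.isLt
    have h2 := hS i.val (le_of_lt i.isLt)
    have hins : univ.filter (fun j : Fin m => (j : ℕ) < i.val + 1) =
        insert i (univ.filter (fun j : Fin m => (j : ℕ) < i.val)) := by
      ext j
      simp only [mem_filter, mem_univ, true_and, mem_insert, Fin.ext_iff]
      omega
    have hni : i ∉ univ.filter (fun j : Fin m => (j : ℕ) < i.val) := by simp
    rw [hins, Finset.sum_insert hni, Finset.sum_insert hni, h2] at h1
    linarith
  -- orthogonality facts
  have hUU : Uᵀ * U = 1 := by
    have := Matrix.mem_orthogonalGroup_iff' (Fin m) ℝ |>.mp hU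
    simpa [Matrix.star_eq_conjTranspose] using this
  have hVV : Vᵀ * V = 1 := by
    have := Matrix.mem_orthogonalGroup_iff' (Fin n) ℝ |>.mp hV
    simpa [Matrix.star_eq_conjTranspose] using this
  -- Step 2: Frobenius norm of X equals that of D
  have hXXt : X * Xᵀ = U * (D * Dᵀ) * Uᵀ := by
    rw [hX]
    rw [Matrix.transpose_mul, Matrix.transpose_mul, Matrix.transpose_transpose]
    calc U * D * Vᵀ * (V * (Dᵀ * Uᵀ))
        = U * D * (Vᵀ * V) * (Dᵀ * Uᵀ) := by
          simp only [Matrix.mul_assoc]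
      _ = U * (D * Dᵀ) * Uᵀ := by rw [hVV]; simp only [Matrix.mul_one, Matrix.mul_assoc]
  have htr : Matrix.trace (X * Xᵀ) = Matrix.trace (D * Dᵀ) := by
    rw [hXXt, Matrix.trace_mul_cycle, ← Matrix.mul_assoc, hUU, Matrix.one_mul]
  have hDDt : ∀ i : Fin m, (D * Dᵀ) i i = σ i ^ 2 := by
    intro i
    have : (D * Dᵀ) i i = ∑ j : Fin n, D i j * D i j := by
      simp [Matrix.mul_apply, Matrix.transpose_apply]
    rw [this]
    rw [Finset.sum_eq_single (Fin.castLE hmn i)]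
    · have hc : ((Fin.castLE hmn i : Fin n) : ℕ) = (i : ℕ) := rfl
      simp [hD, hc, sq]
    · intro j _ hj
      have : ¬ ((i : ℕ) = (j : ℕ)) := by
        intro h
        apply hj
        exact Fin.ext h.symm
      simp [hD, this]
    · simp
  have hXF : ∑ i : Fin m, ∑ j : Fin n, X i j ^ 2 = ∑ i : Fin m, σ i ^ 2 := by
    have h1 : Matrix.trace (X * Xᵀ) = ∑ i : Fin m, ∑ j : Fin n, X i j ^ 2 := by
      simp [Matrix.trace, Matrix.diag, Matrix.mul_apply, Matrix.transpose_apply, sq]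
    have h2 : Matrix.trace (D * Dᵀ) = ∑ i : Fin m, σ i ^ 2 := by
      simp [Matrix.trace, Matrix.diag, hDDt]
    rw [← h1, htr, h2]
  -- inner product ⟨X, D⟩
  have hXD : ∀ i : Fin m, ∑ j : Fin n, X i j * D i j = σ i ^ 2 := by
    intro i
    rw [Finset.sum_eq_single (Fin.castLE hmn i)]
    · have hc : D i (Fin.castLE hmn i) = σ i := by simp [hD]
      rw [hc, hdiag i]; ring
    · intro j _ hj
      have : ¬ ((i : ℕ) = (j : ℕ)) := fun h => hj (Fin.ext h.symm)
      simp [hD, this]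
    · simp
  have hDF : ∀ i : Fin m, ∑ j : Fin n, D i j ^ 2 = σ i ^ 2 := by
    intro i
    rw [Finset.sum_eq_single (Fin.castLE hmn i)]
    · simp [hD]
    · intro j _ hj
      have : ¬ ((i : ℕ) = (j : ℕ)) := fun h => hj (Fin.ext h.symm)
      simp [hD, this]
    · simp
  -- Step 3: sum of squares of differences is zero
  have row : ∀ i : Fin m, ∑ j : Fin n, (X i j - D i j) ^ 2 =
      (∑ j : Fin n, X i j ^ 2) - σ i ^ 2 := by
    intro i
    have hc : ∀ j ∈ (univ : Finset (Fin n)),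
        (X i j - D i j) ^ 2 = X i j ^ 2 - 2 * (X i j * D i j) + D i j ^ 2 :=
      fun j _ => by ring
    rw [Finset.sum_congr rfl hc, Finset.sum_add_distrib, Finset.sum_sub_distrib,
      ← Finset.mul_sum, hXD i, hDF i]
    ring
  have hzero : ∑ i : Fin m, ∑ j : Fin n, (X i j - D i j) ^ 2 = 0 := by
    rw [Finset.sum_congr rfl (fun i _ => row i), Finset.sum_sub_distrib, hXF]
    ring
  have hptzero : ∀ i : Fin m, ∀ j : Fin n, (X i j - D i j) ^ 2 = 0 := by
    intro i j
    have houter := (Finset.sum_eq_zero_iff_of_nonneg (fun i _ =>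
      Finset.sum_nonneg (fun j _ => sq_nonneg (X i j - D i j)))).mp hzero i (mem_univ i)
    exact (Finset.sum_eq_zero_iff_of_nonneg (fun j _ => sq_nonneg (X i j - D i j))).mp
      houter j (mem_univ j)
  ext i j
  have := hptzero i j
  have h := pow_eq_zero_iff (n := 2) (by norm_num) |>.mp this
  have : X i j = D i j := by linarith [sub_eq_zero.mp h]
  simpa [hD] using this
end

section
/- Define C_λ(X) = ½‖𝒜(X) − b‖₂² + λT(X) and C_{λ,μ}(X,Z) = μ(C_λ(X) − ½‖𝒜(X) − 𝒜(Z)‖₂²) + ½‖X − Z‖_F². If 0 < μ ≤ ‖𝒜‖^{-2} and X* is a global minimizer of C_λ, then X* is a global minimizer of X ↦ C_{λ,μ}(X, X*). -/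
/-! Since `μ‖𝒜‖² ≤ 1`, the term `½‖X - Z‖²` dominates `½ μ ‖𝒜 X - 𝒜 Z‖²`, so the surrogate
`X ↦ C_{λ,μ}(X, Z)` majorizes `μ C_λ` and touches it at `X = Z`. A minimizer of `C_λ` therefore
also minimizes the surrogate centred at itself. -/

namespace ContinuousLinearMap

variable {E F : Type*} [SeminormedAddCommGroup E] [SeminormedAddCommGroup F] [NormedSpace ℝ E]
  [NormedSpace ℝ F] (A : E →L[ℝ] F) {mu : ℝ} (hmu0 : 0 ≤ mu) (hmu1 : mu ≤ (‖A‖ ^ 2)⁻¹)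
include hmu0 hmu1

theorem mul_sq_norm_apply_le (x : E) : mu * ‖A x‖ ^ 2 ≤ ‖x‖ ^ 2 := by
  have hmuA : mu * ‖A‖ ^ 2 ≤ 1 :=
    (mul_le_mul_of_nonneg_right hmu1 (by positivity)).trans
      (inv_mul_le_one_of_le₀ le_rfl (by positivity))
  calc mu * ‖A x‖ ^ 2 ≤ mu * (‖A‖ * ‖x‖) ^ 2 := by gcongr; exact A.le_opNorm x
    _ = mu * ‖A‖ ^ 2 * ‖x‖ ^ 2 := by ring
    _ ≤ ‖x‖ ^ 2 := mul_le_of_le_one_left (by positivity) hmuA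

theorem mul_le_surrogate (f : E → ℝ) (X Z : E) :
    mu * f X ≤ mu * (f X - 1 / 2 * ‖A X - A Z‖ ^ 2) + 1 / 2 * ‖X - Z‖ ^ 2 := by
  have := A.mul_sq_norm_apply_le hmu0 hmu1 (X - Z)
  rw [map_sub] at this
  linarith

end ContinuousLinearMap

theorem surrogate_minimizer_general (m n p : ℕ)
    (A : EuclideanSpace ℝ (Fin m × Fin n) →L[ℝ] EuclideanSpace ℝ (Fin p))
    (mu : ℝ)
    (hmu0 : 0 < mu) (hmu1 : mu ≤ (‖A‖ ^ 2)⁻¹)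
    (C : EuclideanSpace ℝ (Fin m × Fin n) → ℝ)
    (Cs : EuclideanSpace ℝ (Fin m × Fin n) → EuclideanSpace ℝ (Fin m × Fin n) → ℝ)
    (hCs : ∀ X Z, Cs X Z = mu * (C X - 1 / 2 * ‖A X - A Z‖ ^ 2) + 1 / 2 * ‖X - Z‖ ^ 2)
    (Xstar : EuclideanSpace ℝ (Fin m × Fin n))
    (hXstar : ∀ X, C Xstar ≤ C X) :
    ∀ X, Cs Xstar Xstar ≤ Cs X Xstar := by
  intro X
  calc Cs Xstar Xstar = mu * C Xstar := by simp [hCs]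
    _ ≤ mu * C X := mul_le_mul_of_nonneg_left (hXstar X) hmu0.le
    _ ≤ Cs X Xstar := hCs X Xstar ▸ A.mul_le_surrogate hmu0.le hmu1 C X Xstar

theorem surrogate_minimizer (m n p : ℕ)
    (A : EuclideanSpace ℝ (Fin m × Fin n) →L[ℝ] EuclideanSpace ℝ (Fin p))
    (b : EuclideanSpace ℝ (Fin p)) (lam mu : ℝ) (hlam : 0 < lam)
    (hmu0 : 0 < mu) (hmu1 : mu ≤ (‖A‖ ^ 2)⁻¹)
    (T : EuclideanSpace ℝ (Fin m × Fin n) → ℝ)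
    (C : EuclideanSpace ℝ (Fin m × Fin n) → ℝ)
    (hC : ∀ X, C X = 1 / 2 * ‖A X - b‖ ^ 2 + lam * T X)
    (Cs : EuclideanSpace ℝ (Fin m × Fin n) → EuclideanSpace ℝ (Fin m × Fin n) → ℝ)
    (hCs : ∀ X Z, Cs X Z = mu * (C X - 1 / 2 * ‖A X - A Z‖ ^ 2) + 1 / 2 * ‖X - Z‖ ^ 2)
    (Xstar : EuclideanSpace ℝ (Fin m × Fin n))
    (hXstar : ∀ X, C Xstar ≤ C X) :
    ∀ X, Cs Xstar Xstar ≤ Cs X Xstar :=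
  surrogate_minimizer_general m n p A mu hmu0 hmu1 C Cs hCs Xstar hXstar
end

section
/- Let Y ∈ ℝ^{m×n} with SVD Y = U·Diag(σ)·Vᵀ, σ nonincreasing and nonnegative. Suppose g : [0,∞) → [0,∞) is such that for each s ≥ 0, g(s) minimizes d ↦ ½(d − s)² + λρ_a(|d|) over ℝ. Then X_s = U·Diag(g(σ))·Vᵀ is a global minimizer of X ↦ ½‖X − Y‖_F² + λ∑_i ρ_a(σ_i(X)), where σ_i(X) are the singular values of X. -/
/-!
Orthogonal invariance of the Frobenius norm gives `‖X_s - Y‖² = ∑ (g(σᵢ) - σᵢ)²`, and the singular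
values of `X_s` are the `g(σᵢ)` up to order (compare the characteristic polynomials of `X_s X_sᵀ`),
so the objective at `X_s` is `∑ᵢ ½(g(σᵢ) - σᵢ)² + λ ρ_a(g(σᵢ))`. For any `X` with singular values
`τ`, von Neumann's trace inequality `⟨X, Y⟩ ≤ ∑ τᵢ σᵢ` gives `‖X - Y‖² ≥ ∑ (τᵢ - σᵢ)²`, so the
objective at `X` is at least `∑ᵢ ½(τᵢ - σᵢ)² + λ ρ_a(τᵢ)`, which dominates the previous sum term by
term by the choice of `g`.

For the trace inequality, `⟨X, Y⟩ = τ ᵥ* C ⬝ᵥ σ` where `C` is the Hadamard product of two orthogonal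
matrices (one of them cut down to `m × m`), so its absolute row and column sums are at most `1`.
Nonnegative antitone vectors are nonnegative combinations of indicators of initial segments, and for
those `τ ᵥ* C ⬝ᵥ σ ≤ τ ⬝ᵥ σ` is a row or column sum bound.
-/

open Matrix

/-- Rectangular diagonal matrix built from a vector of length `m` (with `m ≤ n`). -/
def diagMN (m n : ℕ) (σ : Fin m → ℝ) : Matrix (Fin m) (Fin n) ℝ :=
  Matrix.of fun (i : Fin m) (j : Fin n) => if (i : ℕ) = (j : ℕ) then σ i else 0

/-- Squared Frobenius norm. -/
def frobSq (m n : ℕ) (M : Matrix (Fin m) (Fin n) ℝ) : ℝ :=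
  ∑ i : Fin m, ∑ j : Fin n, (M i j) ^ 2

open Finset

theorem sum_abs_mul_le_one {ι : Type*} [Fintype ι] {f g : ι → ℝ} (hf : ∑ i, f i ^ 2 ≤ 1)
    (hg : ∑ i, g i ^ 2 ≤ 1) : ∑ i, |f i * g i| ≤ 1 :=
  calc ∑ i, |f i * g i| ≤ ∑ i, (f i ^ 2 + g i ^ 2) / 2 := sum_le_sum fun i _ => by
        rw [abs_mul, ← sq_abs (f i), ← sq_abs (g i)]
        nlinarith [sq_nonneg (|f i| - |g i|)]
    _ = (∑ i, f i ^ 2 + ∑ i, g i ^ 2) / 2 := by rw [← sum_add_distrib, sum_div]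
    _ ≤ 1 := by linarith

section Orthogonal

variable {ι κ : Type*} [Fintype ι] [DecidableEq ι] [Fintype κ] [DecidableEq κ]

theorem sum_sq_apply_le_one_of_mem_orthogonalGroup {U : Matrix ι ι ℝ}
    (hU : U ∈ orthogonalGroup ι ℝ) (i : ι) (s : Finset ι) : ∑ k ∈ s, U i k ^ 2 ≤ 1 := by
  have hrow : ∑ k, U i k ^ 2 = 1 := by
    simpa [mul_apply, sq] using congrFun (congrFun ((mem_orthogonalGroup_iff ι ℝ).1 hU) i) i
  exact hrow ▸ sum_le_sum_of_subset_of_nonneg (subset_univ s) fun _ _ _ => sq_nonneg _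

theorem row_sum_abs_hadamard_submatrix_le_one {B : Matrix ι ι ℝ} {Q : Matrix κ κ ℝ}
    (hB : B ∈ orthogonalGroup ι ℝ) (hQ : Q ∈ orthogonalGroup κ ℝ) {e : κ → ι}
    (he : Function.Injective e) (i : κ) : ∑ k, |(B.submatrix e e ⊙ Q) i k| ≤ 1 :=
  sum_abs_mul_le_one
    (by simpa [sum_map] using
      sum_sq_apply_le_one_of_mem_orthogonalGroup hB (e i) (univ.map ⟨e, he⟩))
    (by simpa using sum_sq_apply_le_one_of_mem_orthogonalGroup hQ i univ)

theorem col_sum_abs_hadamard_submatrix_le_one {B : Matrix ι ι ℝ} {Q : Matrix κ κ ℝ}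
    (hB : B ∈ orthogonalGroup ι ℝ) (hQ : Q ∈ orthogonalGroup κ ℝ) {e : κ → ι}
    (he : Function.Injective e) (k : κ) : ∑ i, |(B.submatrix e e ⊙ Q) i k| ≤ 1 := by
  simpa [transpose_hadamard] using row_sum_abs_hadamard_submatrix_le_one
    (transpose_mem_unitaryGroup_iff.2 hB) (transpose_mem_unitaryGroup_iff.2 hQ) he k

end Orthogonal

theorem dotProduct_mulVec_le_sum {ι κ : Type*} [Fintype ι] [Fintype κ] {C : Matrix ι κ ℝ}
    (hC : ∀ i, ∑ k, |C i k| ≤ 1) {v : ι → ℝ} {w : κ → ℝ} (hv : 0 ≤ v) (hw : ∀ k, |w k| ≤ 1) :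
    v ⬝ᵥ C *ᵥ w ≤ ∑ i, v i := by
  refine sum_le_sum fun i _ => mul_le_of_le_one_right (hv i) ?_
  calc (C *ᵥ w) i ≤ ∑ k, |C i k * w k| := (le_abs_self _).trans (abs_sum_le_sum_abs _ _)
    _ ≤ ∑ k, |C i k| := sum_le_sum fun k _ => by
        rw [abs_mul]; exact mul_le_of_le_one_right (abs_nonneg _) (hw k)
    _ ≤ 1 := hC i

section Rearrangement

variable {m : ℕ}

theorem Antitone.exists_nonneg_eq_sum_smul_indicator_Iic {τ : Fin m → ℝ} (hτ : Antitone τ)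
    (hτ0 : 0 ≤ τ) : ∃ α : Fin m → ℝ, 0 ≤ α ∧ τ = ∑ p, α p • (Set.Iic p).indicator 1 := by
  set t : ℕ → ℝ := fun k => if h : k < m then τ ⟨k, h⟩ else 0 with ht
  refine ⟨fun p => t p - t (p + 1), fun p => ?_, funext fun i => ?_⟩
  · have hp := p.isLt
    simp only [Pi.zero_apply, sub_nonneg, ht, dif_pos hp]
    split_ifs with h
    · exact hτ (Fin.mk_le_mk.2 (Nat.le_succ _))
    · exact hτ0 p
  · calc τ i = t i - t m := by simp [ht]
      _ = ∑ p ∈ Ico (i : ℕ) m, (t p - t (p + 1)) := by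
        rw [← neg_sub, ← sum_Ico_sub t i.isLt.le, ← sum_neg_distrib]
        simp
      _ = ∑ p ∈ range m, if (i : ℕ) ≤ p then t p - t (p + 1) else 0 := by
        rw [← sum_filter]
        congr 1
        ext p
        simp only [mem_Ico, mem_filter, mem_range]
        tauto
      _ = _ := by
        rw [← Fin.sum_univ_eq_sum_range (fun p : ℕ => if (i : ℕ) ≤ p then t p - t (p + 1) else 0),
          Finset.sum_apply]
        refine Fintype.sum_congr _ _ fun p => ?_
        simp only [Pi.smul_apply, Set.indicator_apply, Set.mem_Iic, Pi.one_apply, smul_eq_mul,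
          mul_ite, mul_one, mul_zero, Fin.le_def]

section LinearOrder

variable {ι : Type*} [Fintype ι] [LinearOrder ι]

theorem indicator_Iic_vecMul_dotProduct_le_of_le {C : Matrix ι ι ℝ} (hrow : ∀ i, ∑ k, |C i k| ≤ 1)
    {p q : ι} (hpq : p ≤ q) :
    (Set.Iic p).indicator 1 ᵥ* C ⬝ᵥ (Set.Iic q).indicator 1
      ≤ (Set.Iic p).indicator (1 : ι → ℝ) ⬝ᵥ (Set.Iic q).indicator 1 := by
  have hw : ∀ k, |(Set.Iic q).indicator (1 : ι → ℝ) k| ≤ 1 := fun k => by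
    rw [Set.indicator_apply]; split_ifs <;> simp
  rw [← dotProduct_mulVec]
  refine (dotProduct_mulVec_le_sum hrow (v := (Set.Iic p).indicator 1)
    (fun _ => Set.indicator_apply_nonneg fun _ => zero_le_one) hw).trans_eq
    (sum_congr rfl fun i _ => ?_)
  simp only [Set.indicator_apply, Set.mem_Iic, Pi.one_apply]
  by_cases hi : i ≤ p
  · simp [hi, hi.trans hpq]
  · simp [hi]

theorem indicator_Iic_vecMul_dotProduct_le {C : Matrix ι ι ℝ} (hrow : ∀ i, ∑ k, |C i k| ≤ 1)
    (hcol : ∀ k, ∑ i, |C i k| ≤ 1) (p q : ι) :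
    (Set.Iic p).indicator 1 ᵥ* C ⬝ᵥ (Set.Iic q).indicator 1
      ≤ (Set.Iic p).indicator (1 : ι → ℝ) ⬝ᵥ (Set.Iic q).indicator 1 := by
  rcases le_total p q with hpq | hqp
  · exact indicator_Iic_vecMul_dotProduct_le_of_le hrow hpq
  · have h := indicator_Iic_vecMul_dotProduct_le_of_le (C := Cᵀ) hcol hqp
    rwa [← dotProduct_mulVec, mulVec_transpose, dotProduct_comm,
      dotProduct_comm ((Set.Iic q).indicator 1)] at h

end LinearOrder

theorem vecMul_dotProduct_le_dotProduct_of_antitone {C : Matrix (Fin m) (Fin m) ℝ}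
    (hrow : ∀ i, ∑ k, |C i k| ≤ 1) (hcol : ∀ k, ∑ i, |C i k| ≤ 1) {τ σ : Fin m → ℝ}
    (hτ : Antitone τ) (hτ0 : 0 ≤ τ) (hσ : Antitone σ) (hσ0 : 0 ≤ σ) :
    τ ᵥ* C ⬝ᵥ σ ≤ τ ⬝ᵥ σ := by
  obtain ⟨α, hα, rfl⟩ := hτ.exists_nonneg_eq_sum_smul_indicator_Iic hτ0
  obtain ⟨β, hβ, rfl⟩ := hσ.exists_nonneg_eq_sum_smul_indicator_Iic hσ0
  simp only [sum_vecMul, smul_vecMul, sum_dotProduct, dotProduct_sum, smul_dotProduct,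
    dotProduct_smul]
  gcongr with q _ p _
  · exact hβ q
  · exact hα p
  · exact indicator_Iic_vecMul_dotProduct_le hrow hcol p q

end Rearrangement

section RectangularDiagonal

variable {m n : ℕ}

theorem diagMN_apply (hmn : m ≤ n) (δ : Fin m → ℝ) (i : Fin m) (j : Fin n) :
    diagMN m n δ i j = if Fin.castLE hmn i = j then δ i else 0 := by
  simp [diagMN, Fin.ext_iff]

theorem diagMN_mul_mul_transpose_diagMN (hmn : m ≤ n) (δ ε : Fin m → ℝ)
    (B : Matrix (Fin n) (Fin n) ℝ) :
    diagMN m n δ * B * (diagMN m n ε)ᵀ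
      = diagonal δ * B.submatrix (Fin.castLE hmn) (Fin.castLE hmn) * diagonal ε := by
  ext i l
  simp [diagMN_apply hmn, mul_apply, diagonal_apply]

theorem diagMN_mul_transpose_diagMN (hmn : m ≤ n) (δ ε : Fin m → ℝ) :
    diagMN m n δ * (diagMN m n ε)ᵀ = diagonal (δ * ε) := by
  rw [← Matrix.mul_one (diagMN m n δ), diagMN_mul_mul_transpose_diagMN hmn,
    submatrix_one _ (Fin.castLE_injective hmn), Matrix.mul_one, diagonal_mul_diagonal]
  rfl

theorem diagMN_sub (δ ε : Fin m → ℝ) : diagMN m n δ - diagMN m n ε = diagMN m n (δ - ε) := by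
  ext i j
  by_cases h : (i : ℕ) = j <;> simp [diagMN, h]

theorem frobSq_eq_trace (M : Matrix (Fin m) (Fin n) ℝ) : frobSq m n M = trace (M * Mᵀ) := by
  simp [frobSq, trace, mul_apply, sq]

theorem frobSq_diagMN (hmn : m ≤ n) (δ : Fin m → ℝ) :
    frobSq m n (diagMN m n δ) = ∑ i, δ i ^ 2 := by
  simp [frobSq_eq_trace, diagMN_mul_transpose_diagMN hmn, sq]

theorem frobSq_mul_mul_transpose {U : Matrix (Fin m) (Fin m) ℝ} {V : Matrix (Fin n) (Fin n) ℝ}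
    (hU : U ∈ orthogonalGroup (Fin m) ℝ) (hV : V ∈ orthogonalGroup (Fin n) ℝ)
    (M : Matrix (Fin m) (Fin n) ℝ) : frobSq m n (U * M * Vᵀ) = frobSq m n M := by
  rw [frobSq_eq_trace, frobSq_eq_trace, transpose_mul, transpose_mul, transpose_transpose,
    Matrix.mul_assoc, Matrix.mul_assoc, ← Matrix.mul_assoc Vᵀ, (mem_orthogonalGroup_iff' _ ℝ).1 hV,
    Matrix.one_mul, trace_mul_comm, Matrix.mul_assoc, Matrix.mul_assoc,
    (mem_orthogonalGroup_iff' _ ℝ).1 hU, Matrix.mul_one]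

theorem frobSq_sub (M N : Matrix (Fin m) (Fin n) ℝ) :
    frobSq m n (M - N) = frobSq m n M - 2 * trace (M * Nᵀ) + frobSq m n N := by
  rw [frobSq_eq_trace, frobSq_eq_trace, frobSq_eq_trace, transpose_sub, Matrix.sub_mul,
    Matrix.mul_sub, Matrix.mul_sub, trace_sub, trace_sub, trace_sub, ← trace_transpose (N * Mᵀ),
    transpose_mul, transpose_transpose]
  ring

end RectangularDiagonal

section VonNeumann

variable {m n : ℕ}

theorem trace_mul_transpose_le_dotProduct_of_antitone (hmn : m ≤ n)
    {U₁ U₂ : Matrix (Fin m) (Fin m) ℝ} {V₁ V₂ : Matrix (Fin n) (Fin n) ℝ}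
    (hU₁ : U₁ ∈ orthogonalGroup (Fin m) ℝ) (hU₂ : U₂ ∈ orthogonalGroup (Fin m) ℝ)
    (hV₁ : V₁ ∈ orthogonalGroup (Fin n) ℝ) (hV₂ : V₂ ∈ orthogonalGroup (Fin n) ℝ)
    {τ σ : Fin m → ℝ} (hτ : Antitone τ) (hτ0 : 0 ≤ τ) (hσ : Antitone σ) (hσ0 : 0 ≤ σ) :
    trace ((U₁ * diagMN m n τ * V₁ᵀ) * (U₂ * diagMN m n σ * V₂ᵀ)ᵀ) ≤ τ ⬝ᵥ σ := by
  have hB : V₁ᵀ * V₂ ∈ orthogonalGroup (Fin n) ℝ :=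
    mul_mem (transpose_mem_unitaryGroup_iff.2 hV₁) hV₂
  have hQ : U₁ᵀ * U₂ ∈ orthogonalGroup (Fin m) ℝ :=
    mul_mem (transpose_mem_unitaryGroup_iff.2 hU₁) hU₂
  have htrace : trace ((U₁ * diagMN m n τ * V₁ᵀ) * (U₂ * diagMN m n σ * V₂ᵀ)ᵀ)
      = τ ᵥ* ((V₁ᵀ * V₂).submatrix (Fin.castLE hmn) (Fin.castLE hmn) ⊙ (U₁ᵀ * U₂)) ⬝ᵥ σ := by
    rw [dotProduct_vecMul_hadamard, transpose_mul (U₁ᵀ * U₂), diagonal_transpose,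
      ← Matrix.mul_assoc, ← diagMN_mul_mul_transpose_diagMN hmn]
    simp only [transpose_mul, transpose_transpose, Matrix.mul_assoc]
    rw [trace_mul_comm U₁]
    simp only [Matrix.mul_assoc]
  rw [htrace]
  exact vecMul_dotProduct_le_dotProduct_of_antitone
    (row_sum_abs_hadamard_submatrix_le_one hB hQ (Fin.castLE_injective hmn))
    (col_sum_abs_hadamard_submatrix_le_one hB hQ (Fin.castLE_injective hmn)) hτ hτ0 hσ hσ0

theorem sum_sq_sub_le_frobSq_sub (hmn : m ≤ n)
    {U₁ U₂ : Matrix (Fin m) (Fin m) ℝ} {V₁ V₂ : Matrix (Fin n) (Fin n) ℝ}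
    (hU₁ : U₁ ∈ orthogonalGroup (Fin m) ℝ) (hU₂ : U₂ ∈ orthogonalGroup (Fin m) ℝ)
    (hV₁ : V₁ ∈ orthogonalGroup (Fin n) ℝ) (hV₂ : V₂ ∈ orthogonalGroup (Fin n) ℝ)
    {τ σ : Fin m → ℝ} (hτ : Antitone τ) (hτ0 : 0 ≤ τ) (hσ : Antitone σ) (hσ0 : 0 ≤ σ) :
    ∑ i, (τ i - σ i) ^ 2 ≤ frobSq m n (U₁ * diagMN m n τ * V₁ᵀ - U₂ * diagMN m n σ * V₂ᵀ) := by
  have h := trace_mul_transpose_le_dotProduct_of_antitone hmn hU₁ hU₂ hV₁ hV₂ hτ hτ0 hσ hσ0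
  rw [frobSq_sub, frobSq_mul_mul_transpose hU₁ hV₁, frobSq_mul_mul_transpose hU₂ hV₂,
    frobSq_diagMN hmn, frobSq_diagMN hmn]
  have hexp : ∑ i, (τ i - σ i) ^ 2 = ∑ i, τ i ^ 2 - 2 * τ ⬝ᵥ σ + ∑ i, σ i ^ 2 := by
    simp only [dotProduct, mul_sum, ← sum_sub_distrib, ← sum_add_distrib]
    exact sum_congr rfl fun i _ => by ring
  linarith

end VonNeumann

section SingularValues

theorem charpoly_mul_transpose_of_mem_orthogonalGroup {ι κ R : Type*} [Fintype ι] [DecidableEq ι]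
    [Fintype κ] [DecidableEq κ] [CommRing R] {U : Matrix ι ι R} {V : Matrix κ κ R}
    (hU : U ∈ orthogonalGroup ι R) (hV : V ∈ orthogonalGroup κ R) (M : Matrix ι κ R) :
    ((U * M * Vᵀ) * (U * M * Vᵀ)ᵀ).charpoly = (M * Mᵀ).charpoly := by
  rw [transpose_mul, transpose_mul, transpose_transpose, Matrix.mul_assoc, Matrix.mul_assoc,
    ← Matrix.mul_assoc Vᵀ, (mem_orthogonalGroup_iff' _ R).1 hV, Matrix.one_mul, charpoly_mul_comm,
    Matrix.mul_assoc, Matrix.mul_assoc, (mem_orthogonalGroup_iff' _ R).1 hU, Matrix.mul_one]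

theorem roots_charpoly_diagonal {ι R : Type*} [Fintype ι] [DecidableEq ι] [CommRing R] [IsDomain R]
    (d : ι → R) : (diagonal d).charpoly.roots = univ.val.map d := by
  have h := Polynomial.roots_multiset_prod_X_sub_C (univ.val.map d)
  rw [Multiset.map_map] at h
  rwa [charpoly_diagonal, ← prod_map_val]

variable {m n : ℕ}

theorem sum_comp_eq_of_mul_diagMN_mul_transpose_eq (hmn : m ≤ n)
    {U₁ U₂ : Matrix (Fin m) (Fin m) ℝ} {V₁ V₂ : Matrix (Fin n) (Fin n) ℝ}
    (hU₁ : U₁ ∈ orthogonalGroup (Fin m) ℝ) (hU₂ : U₂ ∈ orthogonalGroup (Fin m) ℝ)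
    (hV₁ : V₁ ∈ orthogonalGroup (Fin n) ℝ) (hV₂ : V₂ ∈ orthogonalGroup (Fin n) ℝ)
    {δ ε : Fin m → ℝ} (hδ : 0 ≤ δ) (hε : 0 ≤ ε)
    (h : U₁ * diagMN m n δ * V₁ᵀ = U₂ * diagMN m n ε * V₂ᵀ) (f : ℝ → ℝ) :
    ∑ i, f (δ i) = ∑ i, f (ε i) := by
  have hsq : univ.val.map (δ * δ) = univ.val.map (ε * ε) := by
    have h' := congrArg (fun M => (M * Mᵀ).charpoly.roots) h
    simpa only [charpoly_mul_transpose_of_mem_orthogonalGroup hU₁ hV₁,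
      charpoly_mul_transpose_of_mem_orthogonalGroup hU₂ hV₂, diagMN_mul_transpose_diagMN hmn,
      roots_charpoly_diagonal] using h'
  have hsqrt : ∀ γ : Fin m → ℝ, 0 ≤ γ →
      ∑ i, f (γ i) = ((univ.val.map (γ * γ)).map (f ∘ Real.sqrt)).sum := fun γ hγ => by
    rw [Multiset.map_map, sum_map_val]
    exact sum_congr rfl fun i _ => by simp [Real.sqrt_mul_self (hγ i)]
  rw [hsqrt δ hδ, hsqrt ε hε, hsq]

end SingularValues

theorem ts1_proximal_map_general (m n : ℕ) (hmn : m ≤ n) (a lam : ℝ)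
    (σfun : Matrix (Fin m) (Fin n) ℝ → Fin m → ℝ)
    (hσfun : ∀ M : Matrix (Fin m) (Fin n) ℝ,
      (∀ i, 0 ≤ σfun M i) ∧ Antitone (σfun M) ∧
      ∃ U : Matrix (Fin m) (Fin m) ℝ, ∃ V : Matrix (Fin n) (Fin n) ℝ,
        U ∈ Matrix.orthogonalGroup (Fin m) ℝ ∧ V ∈ Matrix.orthogonalGroup (Fin n) ℝ ∧
        M = U * diagMN m n (σfun M) * Vᵀ)
    (Y : Matrix (Fin m) (Fin n) ℝ)
    (U : Matrix (Fin m) (Fin m) ℝ) (V : Matrix (Fin n) (Fin n) ℝ)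
    (hU : U ∈ Matrix.orthogonalGroup (Fin m) ℝ)
    (hV : V ∈ Matrix.orthogonalGroup (Fin n) ℝ)
    (σ : Fin m → ℝ) (hσ0 : ∀ i, 0 ≤ σ i) (hσdec : Antitone σ)
    (hY : Y = U * diagMN m n σ * Vᵀ)
    (g : ℝ → ℝ) (hg0 : ∀ s : ℝ, 0 ≤ s → 0 ≤ g s)
    (hgmin : ∀ s : ℝ, 0 ≤ s → ∀ d : ℝ,
      1 / 2 * (g s - s) ^ 2 + lam * ((a + 1) * |g s| / (a + |g s|)) ≤
      1 / 2 * (d - s) ^ 2 + lam * ((a + 1) * |d| / (a + |d|))) :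
    ∀ X : Matrix (Fin m) (Fin n) ℝ,
      1 / 2 * frobSq m n (U * diagMN m n (fun i => g (σ i)) * Vᵀ - Y)
          + lam * ∑ i, (a + 1) * σfun (U * diagMN m n (fun i => g (σ i)) * Vᵀ) i /
              (a + σfun (U * diagMN m n (fun i => g (σ i)) * Vᵀ) i) ≤
      1 / 2 * frobSq m n (X - Y) + lam * ∑ i, (a + 1) * σfun X i / (a + σfun X i) := by
  intro X
  set Xs := U * diagMN m n (fun i => g (σ i)) * Vᵀ with hXs_def
  have hgσ0 : ∀ i, 0 ≤ g (σ i) := fun i => hg0 _ (hσ0 i)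
  obtain ⟨hτ0, hτ, U₁, V₁, hU₁, hV₁, hX⟩ := hσfun X
  obtain ⟨hτs0, -, U₂, V₂, hU₂, hV₂, hXs⟩ := hσfun Xs
  have hfit : frobSq m n (Xs - Y) = ∑ i, (g (σ i) - σ i) ^ 2 := by
    rw [hXs_def, hY, ← Matrix.sub_mul, ← Matrix.mul_sub, diagMN_sub,
      frobSq_mul_mul_transpose hU hV, frobSq_diagMN hmn]
    rfl
  have hpenalty : ∑ i, (a + 1) * σfun Xs i / (a + σfun Xs i)
      = ∑ i, (a + 1) * g (σ i) / (a + g (σ i)) :=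
    sum_comp_eq_of_mul_diagMN_mul_transpose_eq hmn hU₂ hU hV₂ hV hτs0 hgσ0 hXs.symm
      fun t => (a + 1) * t / (a + t)
  have hmirsky : ∑ i, (σfun X i - σ i) ^ 2 ≤ frobSq m n (X - Y) := by
    conv_rhs => rw [hX, hY]
    exact sum_sq_sub_le_frobSq_sub hmn hU₁ hU hV₁ hV hτ hτ0 hσdec hσ0
  calc _ = ∑ i, (1 / 2 * (g (σ i) - σ i) ^ 2 + lam * ((a + 1) * g (σ i) / (a + g (σ i)))) := by
        rw [hfit, hpenalty, mul_sum, mul_sum, ← sum_add_distrib]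
    _ ≤ ∑ i, (1 / 2 * (σfun X i - σ i) ^ 2 + lam * ((a + 1) * σfun X i / (a + σfun X i))) :=
        sum_le_sum fun i _ => by
          simpa only [abs_of_nonneg (hgσ0 i), abs_of_nonneg (hτ0 i)] using
            hgmin (σ i) (hσ0 i) (σfun X i)
    _ ≤ _ := by
        rw [sum_add_distrib, ← mul_sum, ← mul_sum]
        linarith

theorem ts1_proximal_map (m n : ℕ) (hmn : m ≤ n) (a lam : ℝ) (ha : 0 < a) (hlam : 0 < lam)
    (σfun : Matrix (Fin m) (Fin n) ℝ → Fin m → ℝ)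
    (hσfun : ∀ M : Matrix (Fin m) (Fin n) ℝ,
      (∀ i, 0 ≤ σfun M i) ∧ Antitone (σfun M) ∧
      ∃ U : Matrix (Fin m) (Fin m) ℝ, ∃ V : Matrix (Fin n) (Fin n) ℝ,
        U ∈ Matrix.orthogonalGroup (Fin m) ℝ ∧ V ∈ Matrix.orthogonalGroup (Fin n) ℝ ∧
        M = U * diagMN m n (σfun M) * Vᵀ)
    (Y : Matrix (Fin m) (Fin n) ℝ)
    (U : Matrix (Fin m) (Fin m) ℝ) (V : Matrix (Fin n) (Fin n) ℝ)
    (hU : U ∈ Matrix.orthogonalGroup (Fin m) ℝ)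
    (hV : V ∈ Matrix.orthogonalGroup (Fin n) ℝ)
    (σ : Fin m → ℝ) (hσ0 : ∀ i, 0 ≤ σ i) (hσdec : Antitone σ)
    (hY : Y = U * diagMN m n σ * Vᵀ)
    (g : ℝ → ℝ) (hg0 : ∀ s : ℝ, 0 ≤ s → 0 ≤ g s)
    (hgmin : ∀ s : ℝ, 0 ≤ s → ∀ d : ℝ,
      1 / 2 * (g s - s) ^ 2 + lam * ((a + 1) * |g s| / (a + |g s|)) ≤
      1 / 2 * (d - s) ^ 2 + lam * ((a + 1) * |d| / (a + |d|))) :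
    ∀ X : Matrix (Fin m) (Fin n) ℝ,
      1 / 2 * frobSq m n (U * diagMN m n (fun i => g (σ i)) * Vᵀ - Y)
          + lam * ∑ i, (a + 1) * σfun (U * diagMN m n (fun i => g (σ i)) * Vᵀ) i /
              (a + σfun (U * diagMN m n (fun i => g (σ i)) * Vᵀ) i) ≤
      1 / 2 * frobSq m n (X - Y) + lam * ∑ i, (a + 1) * σfun X i / (a + σfun X i) :=
  ts1_proximal_map_general m n hmn a lam σfun hσfun Y U V hU hV σ hσ0 hσdec hY g hg0 hgmin
end

section
/- For any matrices X, D_y ∈ ℝ^{m×n} where D_y = Diag(σ) is diagonal with nonincreasing nonnegative entries, the Frobenius inner product satisfies ⟨X, D_y⟩ ≤ ⟨D_x, D_y⟩, where D_x = Diag(σ_x) is the diagonal matrix of singular values of X (in decreasing order). -/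
open Matrix

/-!
With `W i k = U i k * V i k` (indices of `V` embedded into `Fin n`), the hypothesis `X = U D_x Vᵀ`
gives `⟨X, D_y⟩ = ∑ i k, σ i * σx k * W i k`, while `⟨D_x, D_y⟩ = ∑ i, σ i * σx i`. Since
`U i k * V i k ≤ (U i k ^ 2 + V i k ^ 2) / 2` and the rows and columns of an orthogonal matrix are
unit vectors, every partial row or column sum of `W` is at most `1`. Writing the antitone
nonnegative weights `σ` and `σx` as nonnegative combinations of indicators of initial segments
(Abel summation, i.e. `D_y = ∑ i, (σ i - σ (i+1)) I_i`) reduces the claim to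
`∑ i ≤ p, ∑ k ≤ q, W i k ≤ min p q + 1`, which follows from the row or the column bound.
-/

open Finset

theorem Fin.sum_mul_nonneg_of_sum_Iic_nonneg {m : ℕ} {a z : Fin m → ℝ} (ha : Antitone a)
    (ha0 : ∀ i, 0 ≤ a i) (hz : ∀ p, 0 ≤ ∑ i ∈ Iic p, z i) : 0 ≤ ∑ i, a i * z i := by
  induction m with
  | zero => simp
  | succ m ih =>
    have split : ∑ i, a i * z i = ∑ i : Fin m, (a i.castSucc - a (last m)) * z i.castSucc
        + a (last m) * ∑ i, z i := by
      simp only [Fin.sum_univ_castSucc, sub_mul, sum_sub_distrib, mul_add, mul_sum]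
      ring
    rw [split]
    refine add_nonneg (ih (fun i j hij => ?_) (fun i => ?_) (fun p => ?_))
      (mul_nonneg (ha0 _) (by simpa [Iic_top] using hz ⊤))
    · exact sub_le_sub_right (ha (Fin.castSucc_le_castSucc_iff.2 hij)) _
    · exact sub_nonneg.2 (ha (Fin.le_last _))
    · simpa [Fin.sum_Iic_castSucc] using hz p.castSucc

theorem Fin.sum_mul_le_sum_mul_of_sum_Iic_le {m : ℕ} {a x y : Fin m → ℝ} (ha : Antitone a)
    (ha0 : ∀ i, 0 ≤ a i) (hxy : ∀ p, ∑ i ∈ Iic p, x i ≤ ∑ i ∈ Iic p, y i) :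
    ∑ i, a i * x i ≤ ∑ i, a i * y i := by
  have := Fin.sum_mul_nonneg_of_sum_Iic_nonneg (z := y - x) ha ha0
    fun p => by simpa [sum_sub_distrib] using hxy p
  simpa [mul_sub, sum_sub_distrib] using this

theorem Fin.sum_mul_sum_mul_le_sum_mul {m : ℕ} {a b : Fin m → ℝ} {W : Matrix (Fin m) (Fin m) ℝ}
    (ha : Antitone a) (ha0 : ∀ i, 0 ≤ a i) (hb : Antitone b) (hb0 : ∀ i, 0 ≤ b i)
    (hrow : ∀ i (T : Finset (Fin m)), ∑ k ∈ T, W i k ≤ 1)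
    (hcol : ∀ k (S : Finset (Fin m)), ∑ i ∈ S, W i k ≤ 1) :
    ∑ i, a i * ∑ k, b k * W i k ≤ ∑ i, a i * b i := by
  refine Fin.sum_mul_le_sum_mul_of_sum_Iic_le ha ha0 fun p => ?_
  have hrect : ∀ q, ∑ k ∈ Iic q, ∑ i ∈ Iic p, W i k ≤
      ∑ k ∈ Iic q, if k ≤ p then (1 : ℝ) else 0 := by
    intro q
    rcases le_total p q with hpq | hqp
    · have : (Iic q).filter (· ≤ p) = Iic p := by
        ext k; simpa using fun hkp => hkp.trans hpq
      rw [sum_comm, sum_ite, sum_const_zero, add_zero, Finset.sum_const, this, nsmul_one]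
      simpa using sum_le_sum fun i (_ : i ∈ Iic p) => hrow i (Iic q)
    · rw [sum_congr rfl fun k hk => if_pos ((mem_Iic.1 hk).trans hqp)]
      simpa using sum_le_sum fun k (_ : k ∈ Iic q) => hcol k (Iic p)
  calc ∑ i ∈ Iic p, ∑ k, b k * W i k = ∑ k, b k * ∑ i ∈ Iic p, W i k := by
        rw [sum_comm]; simp only [mul_sum]
    _ ≤ ∑ k, b k * if k ≤ p then 1 else 0 := Fin.sum_mul_le_sum_mul_of_sum_Iic_le hb hb0 hrect
    _ = ∑ k ∈ Iic p, b k := by simp [← sum_filter, filter_ge_eq_Iic]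

theorem sum_sq_apply_comp_le_one {ι κ : Type*} [Fintype ι] [Fintype κ] [DecidableEq κ]
    {V : Matrix κ κ ℝ} (hV : V ∈ orthogonalGroup κ ℝ) {e : ι → κ} (he : Function.Injective e) (j : κ) : ∑ k, V j (e k) ^ 2 ≤ 1 := by
  calc ∑ k, V j (e k) ^ 2 = ∑ l ∈ univ.image e, V j l ^ 2 :=
        (sum_image (f := fun l => V j l ^ 2) fun _ _ _ _ h => he h).symm
    _ ≤ ∑ l, V j l ^ 2 := sum_le_univ_sum_of_nonneg fun _ => sq_nonneg _
    _ = (V * Vᵀ) j j := by simp [mul_apply, sq]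
    _ = 1 := by simp [(mem_orthogonalGroup_iff _ _).1 hV]

theorem sum_mul_apply_le_one {ι κ : Type*} [Fintype ι] [DecidableEq ι] [Fintype κ] [DecidableEq κ]
    {U : Matrix ι ι ℝ} {V : Matrix κ κ ℝ}
    (hU : U ∈ orthogonalGroup ι ℝ) (hV : V ∈ orthogonalGroup κ ℝ) {e : ι → κ}
    (he : Function.Injective e) (i : ι) (T : Finset ι) :
    ∑ k ∈ T, U i k * V (e i) (e k) ≤ 1 := by
  calc ∑ k ∈ T, U i k * V (e i) (e k) ≤ ∑ k ∈ T, (U i k ^ 2 + V (e i) (e k) ^ 2) / 2 :=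
        sum_le_sum fun k _ => by linarith [two_mul_le_add_sq (U i k) (V (e i) (e k))]
    _ ≤ ∑ k, (U i k ^ 2 + V (e i) (e k) ^ 2) / 2 :=
        sum_le_univ_sum_of_nonneg fun _ => by positivity
    _ = (∑ k, U i k ^ 2 + ∑ k, V (e i) (e k) ^ 2) / 2 := by rw [← sum_div, sum_add_distrib]
    _ ≤ 1 := by
        have hUi : ∑ k, U i k ^ 2 ≤ 1 := sum_sq_apply_comp_le_one hU Function.injective_id i
        linarith [sum_sq_apply_comp_le_one hV he (e i)]

theorem sum_diagMN_mul {m n : ℕ} (hmn : m ≤ n) (σ : Fin m → ℝ) (i : Fin m) (f : Fin n → ℝ) :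
    ∑ j, diagMN m n σ i j * f j = σ i * f (Fin.castLE hmn i) := by
  rw [Fintype.sum_eq_single (Fin.castLE hmn i)]
  · simp [diagMN]
  · intro j hj
    have : (i : ℕ) ≠ j := fun h => hj (Fin.ext h.symm)
    simp [diagMN, this]

theorem mul_diagMN_mul_transpose_apply {m n : ℕ} (hmn : m ≤ n) (U : Matrix (Fin m) (Fin m) ℝ)
    (σ : Fin m → ℝ) (V : Matrix (Fin n) (Fin n) ℝ) (i : Fin m) (j : Fin n) :
    (U * diagMN m n σ * Vᵀ) i j = ∑ k, σ k * (U i k * V j (Fin.castLE hmn k)) := by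
  simp only [mul_apply, transpose_apply, sum_mul]
  rw [sum_comm]
  refine sum_congr rfl fun k _ => ?_
  simp only [mul_assoc, ← mul_sum, sum_diagMN_mul hmn]
  ring

theorem inner_le_diag_inner (m n : ℕ) (hmn : m ≤ n)
    (X : Matrix (Fin m) (Fin n) ℝ)
    (U : Matrix (Fin m) (Fin m) ℝ) (V : Matrix (Fin n) (Fin n) ℝ)
    (hU : U ∈ Matrix.orthogonalGroup (Fin m) ℝ)
    (hV : V ∈ Matrix.orthogonalGroup (Fin n) ℝ)
    (σx : Fin m → ℝ) (hσx0 : ∀ i, 0 ≤ σx i) (hσxdec : Antitone σx)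
    (hX : X = U * diagMN m n σx * Vᵀ)
    (σ : Fin m → ℝ) (hσ0 : ∀ i, 0 ≤ σ i) (hσdec : Antitone σ) :
    ∑ i : Fin m, ∑ j : Fin n, X i j * diagMN m n σ i j ≤
    ∑ i : Fin m, ∑ j : Fin n, diagMN m n σx i j * diagMN m n σ i j := by
  have he : Function.Injective (Fin.castLE hmn) := Fin.castLE_injective hmn
  have hdiag (M : Matrix (Fin m) (Fin n) ℝ) :
      ∑ i, ∑ j, M i j * diagMN m n σ i j = ∑ i, σ i * M i (Fin.castLE hmn i) := by
    simp only [mul_comm (M _ _), sum_diagMN_mul hmn]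
  rw [hdiag, hdiag, hX]
  simp only [mul_diagMN_mul_transpose_apply hmn]
  simpa [diagMN] using Fin.sum_mul_sum_mul_le_sum_mul hσdec hσ0 hσxdec hσx0
    (sum_mul_apply_le_one hU hV he)
    (sum_mul_apply_le_one (transpose_mem_unitaryGroup_iff.2 hU)
      (transpose_mem_unitaryGroup_iff.2 hV) he)
end
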